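/- In the algebra FQSym of free quasi-symmetric functions, the elements P_T = Σ_{P(σ)=T} F_σ, indexed by unlabelled binary trees T, span a subalgebra, and the product satisfies P_{T'} · P_{T''} = Σ_{T ∈ Sh(T',T'')} P_T, where Sh(T',T'') is the set of trees T such that the canonical word w_T appears in the shuffle product w_{T'} ⧢ w_{T''}[k], with w_{T''}[k] the tree-word of T'' shifted by the number k of nodes of T'. -/

import Mathlib

namespace Sylv

variable {α : Type*}

/-- Insert a letter into a binary search tree: left on `≤`, right on `>`. -/
def insert [LinearOrder α] (x : α) : BinaryTree α → BinaryTree α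
  | BinaryTree.nil => BinaryTree.node x BinaryTree.nil BinaryTree.nil
  | BinaryTree.node a l r =>
      if x ≤ a then BinaryTree.node a (Sylv.insert x l) r else BinaryTree.node a l (Sylv.insert x r)

/-- The binary search tree `P(w)`, inserting the letters of `w` from right to left. -/
def P [LinearOrder α] (w : List α) : BinaryTree α := w.foldr Sylv.insert BinaryTree.nil

/-- Infix (in-order) reading of a labelled binary tree. -/
def inorder : BinaryTree α → List α
  | BinaryTree.nil => []
  | BinaryTree.node a l r => inorder l ++ a :: inorder r

/-- Postfix (post-order) reading of a labelled binary tree. -/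
def postorder : BinaryTree α → List α
  | BinaryTree.nil => []
  | BinaryTree.node a l r => postorder l ++ postorder r ++ [a]

/-- Binary search tree property: left labels `≤` root, right labels `>` root. -/
def IsBST [LinearOrder α] : BinaryTree α → Prop
  | BinaryTree.nil => True
  | BinaryTree.node a l r =>
      (∀ x ∈ inorder l, x ≤ a) ∧ (∀ x ∈ inorder r, a < x) ∧ IsBST l ∧ IsBST r

/-- Shape (underlying unlabelled tree). -/
def shape : BinaryTree α → BinaryTree Unit
  | BinaryTree.nil => BinaryTree.nil
  | BinaryTree.node _ l r => BinaryTree.node () (shape l) (shape r)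

/-- The sylvester congruence: the monoid congruence generated by
`z x u y ≡ x z u y` for letters `x ≤ y < z` and a word `u`. -/
inductive SylvCong [LinearOrder α] : List α → List α → Prop
  | rel (p u q : List α) (x y z : α) (hxy : x ≤ y) (hyz : y < z) :
      SylvCong (p ++ z :: x :: u ++ y :: q) (p ++ x :: z :: u ++ y :: q)
  | refl (w : List α) : SylvCong w w
  | symm {u v} : SylvCong u v → SylvCong v u
  | trans {u v w} : SylvCong u v → SylvCong v w → SylvCong u w

/-- One rewriting step `x z u y → z x u y` (with `x ≤ y < z`), in any context. -/
inductive SylvStep [LinearOrder α] : List α → List α → Prop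
  | step (p u q : List α) (x y z : α) (hxy : x ≤ y) (hyz : y < z) :
      SylvStep (p ++ x :: z :: u ++ y :: q) (p ++ z :: x :: u ++ y :: q)

/-- Standardization of a word: values in `1..n`. -/
def std [LinearOrder α] [Inhabited α] (w : List α) : List ℕ :=
  (List.range w.length).map (fun i =>
    ((List.range w.length).filter (fun j =>
      w.getD j default < w.getD i default ∨
        (w.getD j default = w.getD i default ∧ j < i))).length + 1)

/-- Inverse of a permutation word of `1..n`. -/
def invPerm (s : List ℕ) : List ℕ :=
  (List.range s.length).map (fun j => s.idxOf (j + 1) + 1)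

/-- `w` is a permutation word of `{1,…,n}`. -/
def IsPermWord (n : ℕ) (w : List ℕ) : Prop := w.Perm (List.range' 1 n)

/-- Decreasing tree: every node's label exceeds all labels in its subtrees. -/
def IsDecreasing : BinaryTree ℕ → Prop
  | BinaryTree.nil => True
  | BinaryTree.node a l r =>
      (∀ x ∈ inorder l, x < a) ∧ (∀ x ∈ inorder r, x < a) ∧ IsDecreasing l ∧ IsDecreasing r

/-- `t` is the decreasing tree of the word `w` (unique when letters are distinct). -/
def IsDecrTreeOf (w : List ℕ) (t : BinaryTree ℕ) : Prop := IsDecreasing t ∧ inorder t = w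

/-- Label the nodes of an unlabelled tree in infix order, starting from `k`. -/
def labelFrom : BinaryTree Unit → ℕ → BinaryTree ℕ × ℕ
  | BinaryTree.nil, k => (BinaryTree.nil, k)
  | BinaryTree.node _ l r, k =>
      let p := labelFrom l k
      let q := labelFrom r (p.2 + 1)
      (BinaryTree.node p.2 p.1 q.1, q.2)

/-- The canonical tree-word `w_T`: postfix reading of `T` labelled in infix order by `1..n`. -/
def treeWord (T : BinaryTree Unit) : List ℕ := postorder (labelFrom T 1).1

/-- Shift all letters of a word by `k`. -/
def shift (k : ℕ) (w : List ℕ) : List ℕ := w.map (· + k)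

/-- `IsShuffle u v w` : `w` appears in the shuffle product `u ⧢ v`. -/
inductive IsShuffle : List ℕ → List ℕ → List ℕ → Prop
  | nil : IsShuffle [] [] []
  | left (a : ℕ) {u v w} : IsShuffle u v w → IsShuffle (a :: u) v (a :: w)
  | right (a : ℕ) {u v w} : IsShuffle u v w → IsShuffle u (a :: v) (a :: w)

/-- A model of the homogeneous components of `FQSym`: formal series on words,
encoded by their coefficient functions. -/
abbrev FQS := List ℕ → ℚ

/-- Product of noncommutative series: convolution over factorizations. -/
noncomputable def mulF (f g : FQS) : FQS := fun w =>
  ∑ i ∈ Finset.range (w.length + 1), f (w.take i) * g (w.drop i)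

open Classical in
/-- `F_σ = ∑_{std w = σ⁻¹} w`. -/
noncomputable def Fel (σ : List ℕ) : FQS := fun w =>
  if std w = invPerm σ then 1 else 0

open Classical in
/-- `P_T = ∑_{P(σ) = T} F_σ`. -/
noncomputable def Pel (T : BinaryTree Unit) : FQS := fun w =>
  if ∃ σ, IsPermWord w.length σ ∧ shape (P σ) = T ∧ std w = invPerm σ then 1 else 0

/-- Inversions (by values) of a permutation word. -/
def InvV (w : List ℕ) : Set (ℕ × ℕ) :=
  {p | p.1 < p.2 ∧ p.1 ∈ w ∧ p.2 ∈ w ∧ w.idxOf p.2 < w.idxOf p.1}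

/-- Right weak order on permutation words: inclusion of inversion sets. -/
def weakLe (u v : List ℕ) : Prop := InvV u ⊆ InvV v

/-- Product of hook lengths of a binary tree. -/
def hookProd : BinaryTree Unit → ℕ
  | BinaryTree.nil => 1
  | BinaryTree.node _ l r => (l.numNodes + r.numNodes + 1) * hookProd l * hookProd r

/-- Major index of a word: sum of descent positions (1-based). -/
def maj (w : List ℕ) : ℕ :=
  ∑ i ∈ Finset.range (w.length - 1),
    if w.getD (i + 1) 0 < w.getD i 0 then i + 1 else 0

/-- `[n]_q` as a polynomial. -/
noncomputable def qInt (n : ℕ) : Polynomial ℚ := ∑ i ∈ Finset.range n, Polynomial.X ^ i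

/-- `[n]_q!`. -/
noncomputable def qFact : ℕ → Polynomial ℚ
  | 0 => 1
  | n + 1 => qFact n * qInt (n + 1)

/-- `∏_{v ∈ T} q^{δ_v} [h_v]_q`. -/
noncomputable def qHook : BinaryTree Unit → Polynomial ℚ
  | BinaryTree.nil => 1
  | BinaryTree.node _ l r =>
      Polynomial.X ^ r.numNodes * qInt (l.numNodes + r.numNodes + 1) * qHook l * qHook r

/-! ### Auxiliary development -/

section Aux

set_option linter.unusedSectionVars false

open List

variable [LinearOrder α]

lemma numNodes_insert (x : α) (t : BinaryTree α) :
    (Sylv.insert x t).numNodes = t.numNodes + 1 := by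
  induction t with
  | nil => rfl
  | node a l r ihl ihr =>
      rw [Sylv.insert]
      split <;> simp [BinaryTree.numNodes, ihl, ihr] <;> omega

lemma numNodes_P (w : List α) : (P w).numNodes = w.length := by
  induction w with
  | nil => rfl
  | cons a w ih => simpa [P, numNodes_insert] using ih

lemma numNodes_shape (t : BinaryTree α) : (shape t).numNodes = t.numNodes := by
  induction t with
  | nil => rfl
  | node a l r ihl ihr => simp [shape, BinaryTree.numNodes, ihl, ihr]

lemma inorder_insert_perm (x : α) (t : BinaryTree α) :
    (inorder (Sylv.insert x t)).Perm (x :: inorder t) := by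
  induction t with
  | nil => simp [Sylv.insert, inorder]
  | node a l r ihl ihr =>
      rw [Sylv.insert]
      split
      · simp only [inorder]
        exact ((ihl.append_right _).trans (by simp)).trans (Perm.refl _)
      · simp only [inorder]
        refine (Perm.append_left _ ((ihr.cons a).trans (Perm.swap _ _ _))).trans ?_
        exact perm_middle

lemma inorder_P_perm (w : List α) : (inorder (P w)).Perm w := by
  induction w with
  | nil => simp [P, inorder]
  | cons a w ih => exact ((inorder_insert_perm a (P w)).trans (ih.cons a))

lemma isBST_insert {t : BinaryTree α} (h : IsBST t) (x : α) : IsBST (Sylv.insert x t) := by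
  induction t with
  | nil => exact ⟨by simp [inorder], by simp [inorder], trivial, trivial⟩
  | node a l r ihl ihr =>
      obtain ⟨h1, h2, h3, h4⟩ := h
      rw [Sylv.insert]
      split
      · refine ⟨?_, h2, ihl h3, h4⟩
        intro y hy
        rcases List.mem_cons.1 ((inorder_insert_perm x l).mem_iff.1 hy) with rfl | hy
        · assumption
        · exact h1 y hy
      · refine ⟨h1, ?_, h3, ihr h4⟩
        intro y hy
        rcases List.mem_cons.1 ((inorder_insert_perm x r).mem_iff.1 hy) with rfl | hy
        · exact lt_of_not_ge (by assumption)
        · exact h2 y hy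

lemma isBST_P (w : List α) : IsBST (P w) := by
  induction w with
  | nil => trivial
  | cons a w ih => exact isBST_insert ih a

lemma sorted_inorder {t : BinaryTree α} (h : IsBST t) : (inorder t).Pairwise (· ≤ ·) := by
  induction t with
  | nil => simp [inorder]
  | node a l r ihl ihr =>
      obtain ⟨h1, h2, h3, h4⟩ := h
      simp only [inorder, List.pairwise_append]
      refine ⟨ihl h3, ?_, ?_⟩
      · exact List.pairwise_cons.2 ⟨fun y hy => (h2 y hy).le, ihr h4⟩
      · intro x hx y hy
        rcases List.mem_cons.1 hy with rfl | hy
        · exact h1 x hx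
        · exact (h1 x hx).trans (h2 y hy).le

lemma postorder_perm_inorder (t : BinaryTree α) : (postorder t).Perm (inorder t) := by
  induction t with
  | nil => rfl
  | node a l r ihl ihr =>
      simp only [postorder, inorder]
      calc postorder l ++ postorder r ++ [a]
          ~ inorder l ++ (inorder r ++ [a]) := by
            rw [List.append_assoc]; exact ihl.append (ihr.append_right _)
        _ ~ inorder l ++ (a :: inorder r) :=
            Perm.append_left _ (perm_append_singleton _ _)

lemma length_postorder (t : BinaryTree α) : (postorder t).length = t.numNodes := by
  induction t with
  | nil => rfl
  | node a l r ihl ihr => simp [postorder, BinaryTree.numNodes, ihl, ihr]; omega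

lemma length_inorder (t : BinaryTree α) : (inorder t).length = t.numNodes := by
  rw [← (postorder_perm_inorder t).length_eq, length_postorder]

lemma P_append (u v : List α) : P (u ++ v) = u.foldr Sylv.insert (P v) := by
  simp [P, List.foldr_append]

lemma foldr_insert_gt {a : α} {w : List α} (hw : ∀ x ∈ w, a < x) (l r : BinaryTree α) :
    w.foldr Sylv.insert (BinaryTree.node a l r) = BinaryTree.node a l (w.foldr Sylv.insert r) := by
  induction w with
  | nil => rfl
  | cons b w ih =>
      simp only [List.foldr_cons]
      rw [ih (fun x hx => hw x (by simp [hx]))]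
      rw [Sylv.insert, if_neg (not_le.2 (hw b (by simp)))]

lemma foldr_insert_le {a : α} {w : List α} (hw : ∀ x ∈ w, x ≤ a) (l r : BinaryTree α) :
    w.foldr Sylv.insert (BinaryTree.node a l r) = BinaryTree.node a (w.foldr Sylv.insert l) r := by
  induction w with
  | nil => rfl
  | cons b w ih =>
      simp only [List.foldr_cons]
      rw [ih (fun x hx => hw x (by simp [hx]))]
      rw [Sylv.insert, if_pos (hw b (by simp))]

lemma P_postorder {t : BinaryTree α} (h : IsBST t) : P (postorder t) = t := by
  induction t with
  | nil => rfl
  | node a l r ihl ihr =>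
      obtain ⟨h1, h2, h3, h4⟩ := h
      simp only [postorder]
      rw [List.append_assoc, P_append, P_append]
      have hPa : P [a] = BinaryTree.node a BinaryTree.nil BinaryTree.nil := rfl
      rw [hPa, foldr_insert_gt (fun x hx => h2 x ((postorder_perm_inorder r).mem_iff.1 hx)) _ _]
      rw [show (postorder r).foldr Sylv.insert BinaryTree.nil = P (postorder r) from rfl, ihr h4]
      rw [foldr_insert_le (fun x hx => h1 x ((postorder_perm_inorder l).mem_iff.1 hx)) _ _]
      rw [show (postorder l).foldr Sylv.insert BinaryTree.nil = P (postorder l) from rfl, ihl h3]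

end Aux

section Cong

set_option linter.unusedSectionVars false

open List

variable [LinearOrder α]

lemma insert_insert_comm {t : BinaryTree α} {x y z : α} (hbst : IsBST t) (hy : y ∈ inorder t)
    (hxy : x ≤ y) (hyz : y < z) :
    Sylv.insert x (Sylv.insert z t) = Sylv.insert z (Sylv.insert x t) := by
  induction t with
  | nil => simp [inorder] at hy
  | node a l r ihl ihr =>
      obtain ⟨h1, h2, h3, h4⟩ := hbst
      by_cases hxa : x ≤ a
      · by_cases hza : z ≤ a
        · -- both go left; y must be in l
          have hyl : y ∈ inorder l := by
            rcases List.mem_append.1 hy with hy | hy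
            · exact hy
            · rcases List.mem_cons.1 hy with rfl | hy
              · exact absurd hza (not_le.2 hyz)
              · exact absurd hza (not_le.2 (lt_trans (h2 y hy) hyz))
          rw [Sylv.insert, if_pos hza, Sylv.insert, if_pos hxa,
            Sylv.insert, if_pos hxa, Sylv.insert, if_pos hza, ihl h3 hyl]
        · -- x left, z right
          rw [Sylv.insert, if_neg hza, Sylv.insert, if_pos hxa,
            Sylv.insert, if_pos hxa, Sylv.insert, if_neg hza]
      · -- x > a, so z > y ≥ x > a; both go right; y ∈ r
        have hax : a < x := lt_of_not_ge hxa
        have hza : ¬ z ≤ a := not_le.2 (lt_of_lt_of_le hax (hxy.trans hyz.le))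
        have hyr : y ∈ inorder r := by
          rcases List.mem_append.1 hy with hy | hy
          · exact absurd (h1 y hy) (not_le.2 (lt_of_lt_of_le hax hxy))
          · rcases List.mem_cons.1 hy with rfl | hy
            · exact absurd hxy hxa
            · exact hy
        rw [Sylv.insert, if_neg hza, Sylv.insert, if_neg hxa,
          Sylv.insert, if_neg hxa, Sylv.insert, if_neg hza, ihr h4 hyr]

lemma SylvCong.P_eq {u v : List α} (h : SylvCong u v) : P u = P v := by
  induction h with
  | rel p u q x y z hxy hyz =>
      have e1 : p ++ z :: x :: u ++ y :: q = p ++ (z :: x :: (u ++ y :: q)) := by simp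
      have e2 : p ++ x :: z :: u ++ y :: q = p ++ (x :: z :: (u ++ y :: q)) := by simp
      rw [e1, e2, P_append, P_append]
      congr 1
      show Sylv.insert z (Sylv.insert x (P (u ++ y :: q)))
        = Sylv.insert x (Sylv.insert z (P (u ++ y :: q)))
      have hy : y ∈ inorder (P (u ++ y :: q)) := by
        rw [(inorder_P_perm _).mem_iff]; simp
      exact (insert_insert_comm (isBST_P _) hy hxy hyz).symm
  | refl w => rfl
  | symm _ ih => exact ih.symm
  | trans _ _ ih1 ih2 => exact ih1.trans ih2

lemma SylvCong.append_left {u v : List α} (p : List α) (h : SylvCong u v) :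
    SylvCong (p ++ u) (p ++ v) := by
  induction h with
  | rel p' u q x y z hxy hyz =>
      have := SylvCong.rel (p ++ p') u q x y z hxy hyz
      simpa [List.append_assoc] using this
  | refl w => exact SylvCong.refl _
  | symm _ ih => exact ih.symm
  | trans _ _ ih1 ih2 => exact ih1.trans ih2

lemma SylvCong.append_right {u v : List α} (q : List α) (h : SylvCong u v) :
    SylvCong (u ++ q) (v ++ q) := by
  induction h with
  | rel p' u' q' x y z hxy hyz =>
      have := SylvCong.rel p' u' (q' ++ q) x y z hxy hyz
      simpa [List.append_assoc] using this
  | refl w => exact SylvCong.refl _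
  | symm _ ih => exact ih.symm
  | trans _ _ ih1 ih2 => exact ih1.trans ih2

lemma SylvCong.perm {u v : List α} (h : SylvCong u v) : u.Perm v := by
  induction h with
  | rel p u q x y z hxy hyz =>
      have := Perm.append_left p (Perm.swap x z (u ++ y :: q))
      simpa [List.append_assoc] using this
  | refl w => exact Perm.refl _
  | symm _ ih => exact ih.symm
  | trans _ _ ih1 ih2 => exact ih1.trans ih2

/-- Move `a` to the right across a block of letters `≤ b`, with `b < a` and `b` occurring later. -/
lemma sylv_move {a b : α} (hba : b < a) :
    ∀ (u s q : List α), (∀ x ∈ u, x ≤ b) →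
      SylvCong (a :: (u ++ (s ++ b :: q))) (u ++ (a :: (s ++ b :: q))) := by
  intro u
  induction u with
  | nil => intro s q _; exact SylvCong.refl _
  | cons x u ih =>
      intro s q hu
      have hxb : x ≤ b := hu x (by simp)
      have step : SylvCong (a :: x :: (u ++ (s ++ b :: q))) (x :: a :: (u ++ (s ++ b :: q))) := by
        have := SylvCong.rel ([] : List α) (u ++ s) q x b a hxb hba
        simpa using this
      refine step.trans ?_
      have := (ih s q (fun y hy => hu y (by simp [hy]))).append_left [x]
      simpa using this

lemma sylvCong_cons_postorder {t : BinaryTree α} (hbst : IsBST t) (a : α) :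
    SylvCong (a :: postorder t) (postorder (Sylv.insert a t)) := by
  induction t with
  | nil => exact SylvCong.refl _
  | node b l r ihl ihr =>
      obtain ⟨h1, h2, h3, h4⟩ := hbst
      by_cases hab : a ≤ b
      · rw [Sylv.insert, if_pos hab]
        show SylvCong (a :: (postorder l ++ postorder r ++ [b]))
          (postorder (Sylv.insert a l) ++ postorder r ++ [b])
        have := (ihl h3).append_right (postorder r ++ [b])
        simpa [List.append_assoc] using this
      · rw [Sylv.insert, if_neg hab]
        have hba : b < a := lt_of_not_ge hab
        show SylvCong (a :: (postorder l ++ postorder r ++ [b]))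
          (postorder l ++ postorder (Sylv.insert a r) ++ [b])
        have hle : ∀ x ∈ postorder l, x ≤ b :=
          fun x hx => h1 x ((postorder_perm_inorder l).mem_iff.1 hx)
        have step1 : SylvCong (a :: (postorder l ++ postorder r ++ [b]))
            (postorder l ++ (a :: (postorder r ++ [b]))) := by
          have := sylv_move hba (postorder l) (postorder r) [] hle
          simpa [List.append_assoc] using this
        refine step1.trans ?_
        have step2 : SylvCong (a :: postorder r ++ [b])
            (postorder (Sylv.insert a r) ++ [b]) := (ihr h4).append_right [b]
        have := step2.append_left (postorder l)
        simpa [List.append_assoc] using this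

lemma sylvCong_P_postorder (w : List α) : SylvCong w (postorder (P w)) := by
  induction w with
  | nil => exact SylvCong.refl _
  | cons a w ih =>
      have h1 : SylvCong (a :: w) (a :: postorder (P w)) := ih.append_left [a]
      exact h1.trans (sylvCong_cons_postorder (isBST_P w) a)

end Cong

section NatCong

open List

lemma SylvCong.filter_le (k : ℕ) {u v : List ℕ} (h : SylvCong u v) :
    SylvCong (u.filter (· ≤ k)) (v.filter (· ≤ k)) := by
  induction h with
  | rel p u q x y z hxy hyz =>
      by_cases hz : z ≤ k
      · have hx : x ≤ k := le_trans (hxy.trans hyz.le) hz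
        have hy : y ≤ k := le_trans hyz.le hz
        have := SylvCong.rel (p.filter (· ≤ k)) (u.filter (· ≤ k)) (q.filter (· ≤ k)) x y z hxy hyz
        simpa [List.filter_append, List.filter_cons, hx, hy, hz, List.append_assoc] using this
      · have e : ((p ++ z :: x :: u ++ y :: q).filter (· ≤ k))
            = ((p ++ x :: z :: u ++ y :: q).filter (· ≤ k)) := by
          simp [List.filter_append, List.filter_cons, hz]
        rw [e]; exact SylvCong.refl _
  | refl w => exact SylvCong.refl _
  | symm _ ih => exact ih.symm
  | trans _ _ ih1 ih2 => exact ih1.trans ih2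

lemma SylvCong.filter_gt (k : ℕ) {u v : List ℕ} (h : SylvCong u v) :
    SylvCong (u.filter (k < ·)) (v.filter (k < ·)) := by
  induction h with
  | rel p u q x y z hxy hyz =>
      by_cases hx : k < x
      · have hy : k < y := lt_of_lt_of_le hx hxy
        have hz : k < z := lt_trans hy hyz
        have := SylvCong.rel (p.filter (k < ·)) (u.filter (k < ·)) (q.filter (k < ·)) x y z hxy hyz
        simpa [List.filter_append, List.filter_cons, hx, hy, hz, List.append_assoc] using this
      · have e : ((p ++ z :: x :: u ++ y :: q).filter (k < ·))
            = ((p ++ x :: z :: u ++ y :: q).filter (k < ·)) := by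
          simp [List.filter_append, List.filter_cons, hx]
        rw [e]; exact SylvCong.refl _
  | refl w => exact SylvCong.refl _
  | symm _ ih => exact ih.symm
  | trans _ _ ih1 ih2 => exact ih1.trans ih2

lemma SylvCong.map_sub (k : ℕ) {u v : List ℕ} (h : SylvCong u v) (hu : ∀ x ∈ u, k < x) :
    SylvCong (u.map (· - k)) (v.map (· - k)) := by
  induction h with
  | rel p u q x y z hxy hyz =>
      have hy : k < y := hu y (by simp)
      have hxy' : x - k ≤ y - k := Nat.sub_le_sub_right hxy k
      have hyz' : y - k < z - k := by omega
      have := SylvCong.rel (p.map (· - k)) (u.map (· - k)) (q.map (· - k))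
        (x - k) (y - k) (z - k) hxy' hyz'
      simpa [List.map_append, List.append_assoc] using this
  | refl w => exact SylvCong.refl _
  | symm h ih =>
      exact (ih (fun x hx => hu x (h.perm.mem_iff.1 hx))).symm
  | trans h1 h2 ih1 ih2 =>
      exact (ih1 hu).trans (ih2 (fun x hx => hu x (h1.perm.mem_iff.2 hx)))

end NatCong

section Trunc

open List

/-- Remove all labels `> k` from a BST. -/
def trunc (k : ℕ) : BinaryTree ℕ → BinaryTree ℕ
  | BinaryTree.nil => BinaryTree.nil
  | BinaryTree.node a l r => if a ≤ k then BinaryTree.node a l (trunc k r) else trunc k l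

/-- Remove all labels `≤ k` from a BST. -/
def truncG (k : ℕ) : BinaryTree ℕ → BinaryTree ℕ
  | BinaryTree.nil => BinaryTree.nil
  | BinaryTree.node a l r => if k < a then BinaryTree.node a (truncG k l) r else truncG k r

lemma postorder_trunc {t : BinaryTree ℕ} (h : IsBST t) (k : ℕ) :
    postorder (trunc k t) = (postorder t).filter (· ≤ k) := by
  induction t with
  | nil => rfl
  | node a l r ihl ihr =>
      obtain ⟨h1, h2, h3, h4⟩ := h
      rw [trunc]
      by_cases hak : a ≤ k
      · rw [if_pos hak]
        have hfl : (postorder l).filter (· ≤ k) = postorder l :=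
          List.filter_eq_self.2 (fun x hx => by
            simpa using le_trans (h1 x ((postorder_perm_inorder l).mem_iff.1 hx)) hak)
        simp [postorder, List.filter_append, List.filter_cons, hak, hfl, ihr h4]
      · rw [if_neg hak]
        have hfr : (postorder r).filter (· ≤ k) = [] :=
          List.filter_eq_nil_iff.2 (fun x hx => by
            simp only [decide_eq_true_eq, not_le]
            exact lt_of_not_ge (fun hxk =>
              hak (le_trans (h2 x ((postorder_perm_inorder r).mem_iff.1 hx)).le hxk)))
        simp [postorder, List.filter_append, List.filter_cons, hak, hfr, ihl h3]

lemma inorder_trunc {t : BinaryTree ℕ} (h : IsBST t) (k : ℕ) :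
    inorder (trunc k t) = (inorder t).filter (· ≤ k) := by
  induction t with
  | nil => rfl
  | node a l r ihl ihr =>
      obtain ⟨h1, h2, h3, h4⟩ := h
      rw [trunc]
      by_cases hak : a ≤ k
      · rw [if_pos hak]
        have hfl : (inorder l).filter (· ≤ k) = inorder l :=
          List.filter_eq_self.2 (fun x hx => by simpa using le_trans (h1 x hx) hak)
        simp [inorder, List.filter_append, List.filter_cons, hak, hfl, ihr h4]
      · rw [if_neg hak]
        have hfr : (inorder r).filter (· ≤ k) = [] :=
          List.filter_eq_nil_iff.2 (fun x hx => by
            simp only [decide_eq_true_eq, not_le]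
            exact lt_of_not_ge (fun hxk => hak (le_trans (h2 x hx).le hxk)))
        simp [inorder, List.filter_append, List.filter_cons, hak, hfr, ihl h3]

lemma isBST_trunc {t : BinaryTree ℕ} (h : IsBST t) (k : ℕ) : IsBST (trunc k t) := by
  induction t with
  | nil => trivial
  | node a l r ihl ihr =>
      obtain ⟨h1, h2, h3, h4⟩ := h
      rw [trunc]
      by_cases hak : a ≤ k
      · rw [if_pos hak]
        refine ⟨h1, ?_, h3, ihr h4⟩
        intro x hx
        rw [inorder_trunc h4] at hx
        exact h2 x (List.mem_of_mem_filter hx)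
      · rw [if_neg hak]; exact ihl h3

lemma postorder_truncG {t : BinaryTree ℕ} (h : IsBST t) (k : ℕ) :
    postorder (truncG k t) = (postorder t).filter (k < ·) := by
  induction t with
  | nil => rfl
  | node a l r ihl ihr =>
      obtain ⟨h1, h2, h3, h4⟩ := h
      rw [truncG]
      by_cases hak : k < a
      · rw [if_pos hak]
        have hfr : (postorder r).filter (k < ·) = postorder r :=
          List.filter_eq_self.2 (fun x hx => by
            simpa using lt_trans hak (h2 x ((postorder_perm_inorder r).mem_iff.1 hx)))
        simp [postorder, List.filter_append, List.filter_cons, hak, hfr, ihl h3]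
      · rw [if_neg hak]
        have hfl : (postorder l).filter (k < ·) = [] :=
          List.filter_eq_nil_iff.2 (fun x hx => by
            simp only [decide_eq_true_eq, not_lt]
            exact le_trans (h1 x ((postorder_perm_inorder l).mem_iff.1 hx)) (not_lt.1 hak))
        simp [postorder, List.filter_append, List.filter_cons, hak, hfl, ihr h4]

lemma inorder_truncG {t : BinaryTree ℕ} (h : IsBST t) (k : ℕ) :
    inorder (truncG k t) = (inorder t).filter (k < ·) := by
  induction t with
  | nil => rfl
  | node a l r ihl ihr =>
      obtain ⟨h1, h2, h3, h4⟩ := h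
      rw [truncG]
      by_cases hak : k < a
      · rw [if_pos hak]
        have hfr : (inorder r).filter (k < ·) = inorder r :=
          List.filter_eq_self.2 (fun x hx => by simpa using lt_trans hak (h2 x hx))
        simp [inorder, List.filter_append, List.filter_cons, hak, hfr, ihl h3]
      · rw [if_neg hak]
        have hfl : (inorder l).filter (k < ·) = [] :=
          List.filter_eq_nil_iff.2 (fun x hx => by
            simp only [decide_eq_true_eq, not_lt]
            exact le_trans (h1 x hx) (not_lt.1 hak))
        simp [inorder, List.filter_append, List.filter_cons, hak, hfl, ihr h4]

lemma isBST_truncG {t : BinaryTree ℕ} (h : IsBST t) (k : ℕ) : IsBST (truncG k t) := by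
  induction t with
  | nil => trivial
  | node a l r ihl ihr =>
      obtain ⟨h1, h2, h3, h4⟩ := h
      rw [truncG]
      by_cases hak : k < a
      · rw [if_pos hak]
        refine ⟨?_, h2, ihl h3, h4⟩
        intro x hx
        rw [inorder_truncG h3] at hx
        exact h1 x (List.mem_of_mem_filter hx)
      · rw [if_neg hak]; exact ihr h4

/-- Map on tree labels. -/
def tmap (f : ℕ → ℕ) : BinaryTree ℕ → BinaryTree ℕ
  | BinaryTree.nil => BinaryTree.nil
  | BinaryTree.node a l r => BinaryTree.node (f a) (tmap f l) (tmap f r)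

lemma postorder_tmap (f : ℕ → ℕ) (t : BinaryTree ℕ) :
    postorder (tmap f t) = (postorder t).map f := by
  induction t with
  | nil => rfl
  | node a l r ihl ihr => simp [tmap, postorder, ihl, ihr]

lemma inorder_tmap (f : ℕ → ℕ) (t : BinaryTree ℕ) :
    inorder (tmap f t) = (inorder t).map f := by
  induction t with
  | nil => rfl
  | node a l r ihl ihr => simp [tmap, inorder, ihl, ihr]

lemma isBST_tmap_sub {t : BinaryTree ℕ} {k : ℕ} (h : IsBST t) (hgt : ∀ x ∈ inorder t, k < x) :
    IsBST (tmap (· - k) t) := by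
  induction t with
  | nil => trivial
  | node a l r ihl ihr =>
      obtain ⟨h1, h2, h3, h4⟩ := h
      have hmem : ∀ x ∈ inorder l, k < x := fun x hx => hgt x (by simp [inorder, hx])
      have hmem' : ∀ x ∈ inorder r, k < x := fun x hx => hgt x (by simp [inorder, hx])
      have hka : k < a := hgt a (by simp [inorder])
      refine ⟨?_, ?_, ihl h3 hmem, ihr h4 hmem'⟩
      · intro x hx
        rw [inorder_tmap] at hx
        obtain ⟨y, hy, rfl⟩ := List.mem_map.1 hx
        exact Nat.sub_le_sub_right (h1 y hy) k
      · intro x hx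
        rw [inorder_tmap] at hx
        obtain ⟨y, hy, rfl⟩ := List.mem_map.1 hx
        have h5 := h2 y hy
        have h6 := hmem' y hy
        show a - k < y - k
        omega

end Trunc

section LabelTree

open List

lemma labelFrom_snd (T : BinaryTree Unit) : ∀ k, (labelFrom T k).2 = k + T.numNodes := by
  induction T with
  | nil => intro k; simp [labelFrom, BinaryTree.numNodes]
  | node a l r ihl ihr =>
      intro k
      simp only [labelFrom, BinaryTree.numNodes]
      rw [ihr, ihl]
      omega

lemma shape_labelFrom (T : BinaryTree Unit) : ∀ k, shape (labelFrom T k).1 = T := by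
  induction T with
  | nil => intro k; rfl
  | node a l r ihl ihr =>
      intro k
      simp only [labelFrom, shape]
      rw [ihl, ihr]

lemma range'_append_one (s m n : ℕ) : range' s m ++ range' (s + m) n = range' s (m + n) := by
  have h := List.range'_append (s := s) (m := m) (n := n) (step := 1)
  simp only [Nat.one_mul] at h
  rw [h]

lemma inorder_labelFrom (T : BinaryTree Unit) : ∀ k, inorder (labelFrom T k).1 = range' k T.numNodes := by
  induction T with
  | nil => intro k; rfl
  | node a l r ihl ihr =>
      intro k
      simp only [labelFrom, inorder, BinaryTree.numNodes]
      rw [ihl, ihr, labelFrom_snd]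
      rw [show k + l.numNodes + 1 = (k + l.numNodes) + 1 by rfl]
      rw [← List.range'_succ (s := k + l.numNodes) (n := r.numNodes) (step := 1)]
      rw [show l.numNodes + r.numNodes + 1 = l.numNodes + (r.numNodes + 1) by omega]
      exact range'_append_one k l.numNodes (r.numNodes + 1)

lemma isBST_labelFrom (T : BinaryTree Unit) : ∀ k, IsBST (labelFrom T k).1 := by
  induction T with
  | nil => intro k; trivial
  | node a l r ihl ihr =>
      intro k
      simp only [labelFrom]
      refine ⟨?_, ?_, ihl k, ihr _⟩
      · intro x hx
        rw [inorder_labelFrom] at hx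
        rw [labelFrom_snd]
        have := List.mem_range'_1.1 hx
        omega
      · intro x hx
        rw [inorder_labelFrom, labelFrom_snd] at hx
        rw [labelFrom_snd]
        have := List.mem_range'_1.1 hx
        omega

lemma labelFrom_of_bst {t : BinaryTree ℕ} (h : IsBST t) :
    ∀ k, inorder t = range' k t.numNodes → labelFrom (shape t) k = (t, k + t.numNodes) := by
  induction t with
  | nil => intro k _; simp [shape, labelFrom, BinaryTree.numNodes]
  | node a l r ihl ihr =>
      obtain ⟨h1, h2, h3, h4⟩ := h
      intro k hin
      simp only [inorder, BinaryTree.numNodes] at hin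
      have hlen : (inorder l).length = l.numNodes := length_inorder l
      have e : range' k (l.numNodes + r.numNodes + 1)
          = range' k l.numNodes ++ (k + l.numNodes) :: range' (k + l.numNodes + 1) r.numNodes := by
        rw [← List.range'_succ (s := k + l.numNodes) (n := r.numNodes) (step := 1)]
        rw [show l.numNodes + r.numNodes + 1 = l.numNodes + (r.numNodes + 1) by omega]
        exact (range'_append_one k l.numNodes (r.numNodes + 1)).symm
      rw [e] at hin
      have hl : inorder l = range' k l.numNodes ∧
          a :: inorder r = (k + l.numNodes) :: range' (k + l.numNodes + 1) r.numNodes := by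
        apply List.append_inj hin
        simp [hlen]
      obtain ⟨hl1, hl2⟩ := hl
      have ha : a = k + l.numNodes := (List.cons.injEq _ _ _ _ ▸ hl2).1
      have hr1 : inorder r = range' (k + l.numNodes + 1) r.numNodes :=
        (List.cons.injEq _ _ _ _ ▸ hl2).2
      simp only [shape, labelFrom]
      rw [ihl h3 k hl1, ihr h4 (k + l.numNodes + 1) hr1]
      simp only [BinaryTree.numNodes]
      refine Prod.ext ?_ ?_
      · simp [ha]
      · simp; omega

lemma P_treeWord (T : BinaryTree Unit) : P (treeWord T) = (labelFrom T 1).1 := by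
  rw [treeWord]
  exact P_postorder (isBST_labelFrom T 1)

lemma shape_P_treeWord (T : BinaryTree Unit) : shape (P (treeWord T)) = T := by
  rw [P_treeWord, shape_labelFrom]

lemma treeWord_inj : Function.Injective treeWord := by
  intro T T₂ h
  rw [← shape_P_treeWord T, ← shape_P_treeWord T₂, h]

lemma length_treeWord (T : BinaryTree Unit) : (treeWord T).length = T.numNodes := by
  rw [treeWord, length_postorder]
  have := numNodes_shape (labelFrom T 1).1
  rw [shape_labelFrom] at this
  omega

lemma mem_treeWord {T : BinaryTree Unit} {x : ℕ} (hx : x ∈ treeWord T) :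
    1 ≤ x ∧ x ≤ T.numNodes := by
  rw [treeWord] at hx
  have := (postorder_perm_inorder _).mem_iff.1 hx
  rw [inorder_labelFrom] at this
  have h2 := List.mem_range'_1.1 this
  have := numNodes_shape (labelFrom T 1).1
  rw [shape_labelFrom] at this
  omega

lemma treeWord_of_bst {t : BinaryTree ℕ} (h : IsBST t) (hin : inorder t = range' 1 t.numNodes) :
    treeWord (shape t) = postorder t := by
  have h2 := labelFrom_of_bst h 1 hin
  rw [treeWord, h2]

lemma inorder_P_eq_range' {n : ℕ} {δ : List ℕ} (hδ : δ.Perm (range' 1 n)) :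
    inorder (P δ) = range' 1 n := by
  have hperm : (inorder (P δ)).Perm (range' 1 n) := (inorder_P_perm δ).trans hδ
  refine List.Perm.eq_of_pairwise' (sorted_inorder (isBST_P δ)) ?_ hperm
  exact (List.pairwise_lt_range' (s := 1) (n := n) 1 (by omega)).imp le_of_lt

end LabelTree

section Shuffle

open List

lemma IsShuffle.perm {u v w : List ℕ} (h : IsShuffle u v w) : w.Perm (u ++ v) := by
  induction h with
  | nil => rfl
  | left a h ih => exact ih.cons a
  | right a h ih => exact (ih.cons a).trans (List.perm_middle).symm

lemma IsShuffle.length {u v w : List ℕ} (h : IsShuffle u v w) :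
    w.length = u.length + v.length := by
  have := h.perm.length_eq
  simpa using this

lemma IsShuffle.filter_eq {u v w : List ℕ} (f : ℕ → Bool) (h : IsShuffle u v w)
    (hu : ∀ x ∈ u, f x = true) (hv : ∀ x ∈ v, f x = false) :
    w.filter f = u ∧ w.filter (fun x => ! f x) = v := by
  induction h with
  | nil => exact ⟨rfl, rfl⟩
  | left a h ih =>
      have ha := hu a (by simp)
      obtain ⟨ih1, ih2⟩ := ih (fun x hx => hu x (by simp [hx])) hv
      constructor
      · simp [List.filter_cons, ha, ih1]
      · simp [List.filter_cons, ha, ih2]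
  | right a h ih =>
      have ha := hv a (by simp)
      obtain ⟨ih1, ih2⟩ := ih hu (fun x hx => hv x (by simp [hx]))
      constructor
      · simp [List.filter_cons, ha, ih1]
      · simp [List.filter_cons, ha, ih2]

lemma isShuffle_filter (w : List ℕ) (f : ℕ → Bool) :
    IsShuffle (w.filter f) (w.filter (fun x => ! f x)) w := by
  induction w with
  | nil => exact IsShuffle.nil
  | cons a w ih =>
      by_cases ha : f a = true
      · simpa [List.filter_cons, ha] using IsShuffle.left a ih
      · have ha' : f a = false := by simpa using ha
        simpa [List.filter_cons, ha'] using IsShuffle.right a ih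

end Shuffle

section KeyThm

open List

lemma map_sub_range' (k : ℕ) : ∀ (s m : ℕ), (range' (k + s) m).map (· - k) = range' s m := by
  intro s m
  induction m generalizing s with
  | zero => rfl
  | succ m ih =>
      rw [List.range'_succ, List.range'_succ]
      simp only [List.map_cons, Nat.add_sub_cancel_left]
      rw [show k + s + 1 = k + (s + 1) by omega, ih (s + 1)]

theorem key_iff (k k'' : ℕ) (T' T'' : BinaryTree Unit) (hk : T'.numNodes = k)
    (hk'' : T''.numNodes = k'') (δ : List ℕ) (hδ : δ.Perm (range' 1 (k + k''))) :
    (shape (P (δ.filter (· ≤ k))) = T' ∧ shape (P ((δ.filter (k < ·)).map (· - k))) = T'')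
      ↔ IsShuffle (treeWord T') (shift k (treeWord T'')) (postorder (P δ)) := by
  have hbst : IsBST (P δ) := isBST_P δ
  have hin : inorder (P δ) = range' 1 (k + k'') := inorder_P_eq_range' hδ
  have hcong : SylvCong δ (postorder (P δ)) := sylvCong_P_postorder δ
  have hsplit : range' 1 (k + k'') = range' 1 k ++ range' (1 + k) k'' :=
    (range'_append_one 1 k k'').symm
  have hfle : (range' 1 (k + k'')).filter (· ≤ k) = range' 1 k := by
    rw [hsplit, List.filter_append]
    rw [List.filter_eq_self.2 (fun x hx => by
        have := List.mem_range'_1.1 hx; simp; omega),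
      List.filter_eq_nil_iff.2 (fun x hx => by
        have := List.mem_range'_1.1 hx; simp; omega)]
    simp
  have hfgt : (range' 1 (k + k'')).filter (k < ·) = range' (1 + k) k'' := by
    rw [hsplit, List.filter_append]
    rw [List.filter_eq_nil_iff.2 (fun x hx => by
        have := List.mem_range'_1.1 hx; simp; omega),
      List.filter_eq_self.2 (fun x hx => by
        have := List.mem_range'_1.1 hx; simp; omega)]
    simp
  constructor
  · -- from the shapes to the shuffle condition
    rintro ⟨h1, h2⟩
    -- lower tree
    have hb1 : IsBST (trunc k (P δ)) := isBST_trunc hbst k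
    have hin1 : inorder (trunc k (P δ)) = range' 1 k := by
      rw [inorder_trunc hbst, hin, hfle]
    have hnum1 : (trunc k (P δ)).numNodes = k := by
      rw [← length_inorder, hin1, List.length_range']
    have hpost1 : postorder (trunc k (P δ)) = (postorder (P δ)).filter (· ≤ k) :=
      postorder_trunc hbst k
    have hc1 : SylvCong (δ.filter (· ≤ k)) (postorder (trunc k (P δ))) := by
      rw [hpost1]; exact hcong.filter_le k
    have ht1 : P (δ.filter (· ≤ k)) = trunc k (P δ) := by
      rw [hc1.P_eq, P_postorder hb1]
    have hshape1 : shape (trunc k (P δ)) = T' := by rw [← ht1, h1]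
    have hw1 : treeWord T' = (postorder (P δ)).filter (· ≤ k) := by
      rw [← hshape1, treeWord_of_bst hb1 (by rw [hin1, hnum1]), hpost1]
    -- upper tree
    have hbG : IsBST (truncG k (P δ)) := isBST_truncG hbst k
    have hinG : inorder (truncG k (P δ)) = range' (1 + k) k'' := by
      rw [inorder_truncG hbst, hin, hfgt]
    have hmemG : ∀ x ∈ inorder (truncG k (P δ)), k < x := by
      rw [hinG]; intro x hx
      have := List.mem_range'_1.1 hx; omega
    have hb2 : IsBST (tmap (· - k) (truncG k (P δ))) := isBST_tmap_sub hbG hmemG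
    have hin2 : inorder (tmap (· - k) (truncG k (P δ))) = range' 1 k'' := by
      rw [inorder_tmap, hinG, show (1 + k) = k + 1 by omega, map_sub_range']
    have hnum2 : (tmap (· - k) (truncG k (P δ))).numNodes = k'' := by
      rw [← length_inorder, hin2, List.length_range']
    have hpost2 : postorder (tmap (· - k) (truncG k (P δ)))
        = ((postorder (P δ)).filter (k < ·)).map (· - k) := by
      rw [postorder_tmap, postorder_truncG hbst]
    have hc2 : SylvCong ((δ.filter (k < ·)).map (· - k))
        (postorder (tmap (· - k) (truncG k (P δ)))) := by
      rw [hpost2]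
      exact (hcong.filter_gt k).map_sub k (fun x hx => of_decide_eq_true (List.mem_filter.1 hx).2)
    have ht2 : P ((δ.filter (k < ·)).map (· - k)) = tmap (· - k) (truncG k (P δ)) := by
      rw [hc2.P_eq, P_postorder hb2]
    have hshape2 : shape (tmap (· - k) (truncG k (P δ))) = T'' := by rw [← ht2, h2]
    have hw2 : treeWord T'' = ((postorder (P δ)).filter (k < ·)).map (· - k) := by
      rw [← hshape2, treeWord_of_bst hb2 (by rw [hin2, hnum2]), hpost2]
    have hw2' : shift k (treeWord T'') = (postorder (P δ)).filter (k < ·) := by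
      rw [hw2, shift, List.map_map]
      have : ∀ x ∈ (postorder (P δ)).filter (k < ·),
          ((fun x => x + k) ∘ fun x => x - k) x = id x := by
        intro x hx
        have := of_decide_eq_true (List.mem_filter.1 hx).2
        simp; omega
      rw [List.map_congr_left this, List.map_id]
    rw [hw1, hw2']
    have hfc : (postorder (P δ)).filter (fun x => ! decide (x ≤ k))
        = (postorder (P δ)).filter (k < ·) := by
      apply List.filter_congr
      intro x _
      rw [← decide_not, decide_eq_decide]
      omega
    rw [← hfc]
    exact isShuffle_filter (postorder (P δ)) (fun x => decide (x ≤ k))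

  · -- from the shuffle condition to the shapes
    intro hsh
    have hwT' : ∀ x ∈ treeWord T', decide (x ≤ k) = true := by
      intro x hx
      have := (mem_treeWord hx).2
      exact decide_eq_true (by omega)
    have hwT'' : ∀ x ∈ shift k (treeWord T''), decide (x ≤ k) = false := by
      intro x hx
      obtain ⟨y, hy, rfl⟩ := List.mem_map.1 hx
      have := (mem_treeWord hy).1
      exact decide_eq_false (by omega)
    obtain ⟨hfil1, hfil2⟩ := hsh.filter_eq (fun x => decide (x ≤ k)) hwT' hwT''
    have hfil2' : (postorder (P δ)).filter (k < ·) = shift k (treeWord T'') := by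
      rw [← hfil2]
      apply List.filter_congr
      intro x _
      rw [← decide_not, decide_eq_decide]
      omega
    constructor
    · have c1 : SylvCong (δ.filter (· ≤ k)) (treeWord T') := by
        rw [← hfil1]; exact hcong.filter_le k
      rw [c1.P_eq, shape_P_treeWord]
    · have c2 : SylvCong (δ.filter (k < ·)) (shift k (treeWord T'')) := by
        rw [← hfil2']; exact hcong.filter_gt k
      have c3 := c2.map_sub k (fun x hx => by
        have := (List.mem_filter.1 hx).2
        exact of_decide_eq_true this)
      have e : (shift k (treeWord T'')).map (· - k) = treeWord T'' := by
        rw [shift, List.map_map]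
        have : ∀ x ∈ treeWord T'', ((fun x => x - k) ∘ fun x => x + k) x = id x := by
          intro x _; simp
        rw [List.map_congr_left this, List.map_id]
      rw [e] at c3
      rw [c3.P_eq, shape_P_treeWord]

end KeyThm

section Std

open List

/-- The comparison of positions used by standardization. -/
def leIdx (w : List ℕ) (i j : ℕ) : Prop :=
  w.getD i 0 < w.getD j 0 ∨ (w.getD i 0 = w.getD j 0 ∧ i ≤ j)

instance (w : List ℕ) : DecidableRel (leIdx w) := fun i j => by
  unfold leIdx; infer_instance

instance (w : List ℕ) : IsTotal ℕ (leIdx w) := ⟨by intro a b; unfold leIdx; omega⟩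

instance (w : List ℕ) : IsTrans ℕ (leIdx w) := ⟨by intro a b c; unfold leIdx; omega⟩

instance (w : List ℕ) : IsAntisymm ℕ (leIdx w) := ⟨by intro a b; unfold leIdx; omega⟩

/-- Indices `0, …, n-1` sorted according to the standardization order. -/
def sortIdx (w : List ℕ) : List ℕ := (List.range w.length).insertionSort (leIdx w)

/-- The inverse of the standardization of `w`, as an explicit sorted-positions word. -/
def stdInv (w : List ℕ) : List ℕ := (sortIdx w).map (· + 1)

lemma sortIdx_perm (w : List ℕ) : (sortIdx w).Perm (List.range w.length) :=
  List.perm_insertionSort _ _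

lemma sortIdx_sorted (w : List ℕ) : (sortIdx w).Pairwise (leIdx w) :=
  List.pairwise_insertionSort _ _

lemma sortIdx_nodup (w : List ℕ) : (sortIdx w).Nodup :=
  (sortIdx_perm w).nodup_iff.2 List.nodup_range

lemma sortIdx_length (w : List ℕ) : (sortIdx w).length = w.length := by
  rw [(sortIdx_perm w).length_eq, List.length_range]

lemma mem_sortIdx {w : List ℕ} {i : ℕ} : i ∈ sortIdx w ↔ i < w.length := by
  rw [(sortIdx_perm w).mem_iff, List.mem_range]

lemma stdInv_length (w : List ℕ) : (stdInv w).length = w.length := by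
  rw [stdInv, List.length_map, sortIdx_length]

lemma stdInv_perm (w : List ℕ) : (stdInv w).Perm (range' 1 w.length) := by
  have h1 : (stdInv w).Perm ((List.range w.length).map (· + 1)) :=
    (sortIdx_perm w).map _
  have h2 : (List.range w.length).map (· + 1) = range' 1 w.length := by
    rw [List.range'_eq_map_range]
    exact List.map_congr_left (fun x _ => by omega)
  rw [h2] at h1
  exact h1

lemma stdInv_nodup (w : List ℕ) : (stdInv w).Nodup :=
  (stdInv_perm w).nodup_iff.2 (List.nodup_range' 1)

lemma nodup_indexOf_getElem {l : List ℕ} (h : l.Nodup) {i : ℕ} (hi : i < l.length) :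
    l.idxOf l[i] = i := by
  have hmem : l[i] ∈ l := List.getElem_mem hi
  have h1 : l.idxOf l[i] < l.length := List.idxOf_lt_length_iff.2 hmem
  have h2 : l[l.idxOf l[i]]'h1 = l[i] := List.getElem_idxOf h1
  exact (h.getElem_inj_iff).1 h2

/-- The standardization predicate for position `i`. -/
lemma std_pred_iff (w : List ℕ) (i j : ℕ) :
    (w.getD j 0 < w.getD i 0 ∨ (w.getD j 0 = w.getD i 0 ∧ j < i)) ↔ (leIdx w j i ∧ j ≠ i) := by
  unfold leIdx
  constructor
  · rintro (h | ⟨h1, h2⟩)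
    · refine ⟨Or.inl h, ?_⟩
      rintro rfl
      exact absurd h (lt_irrefl _)
    · exact ⟨Or.inr ⟨h1, le_of_lt h2⟩, by omega⟩
  · rintro ⟨h1, h2⟩
    rcases h1 with h | ⟨h3, h4⟩
    · exact Or.inl h
    · exact Or.inr ⟨h3, by omega⟩

/-- Core counting lemma: the rank of the `m`-th sorted index is `m + 1`. -/
lemma rank_sortIdx (w : List ℕ) {m : ℕ} (hm : m < (sortIdx w).length) :
    ((List.range w.length).filter (fun j =>
      w.getD j 0 < w.getD ((sortIdx w)[m]) 0 ∨
        (w.getD j 0 = w.getD ((sortIdx w)[m]) 0 ∧ j < (sortIdx w)[m]))).length = m := by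
  set l := sortIdx w with hl
  set a := l[m] with ha
  set f : ℕ → Bool := fun j => decide
    (w.getD j 0 < w.getD a 0 ∨ (w.getD j 0 = w.getD a 0 ∧ j < a)) with hf
  have hperm : ((List.range w.length).filter f).length = (l.filter f).length :=
    ((sortIdx_perm w).filter f).length_eq.symm
  have hfl : l.filter f = l.take m := by
    conv_lhs => rw [← List.take_append_drop m l]
    rw [List.filter_append]
    have h1 : (l.take m).filter f = l.take m := by
      apply List.filter_eq_self.2
      intro x hx
      obtain ⟨i, hi, hxe⟩ := List.mem_iff_getElem.1 hx
      have him : i < m := by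
        have := hi; simp only [List.length_take] at this; omega
      have hil : i < l.length := lt_of_lt_of_le him (le_of_lt hm)
      have hxl : x = l[i] := by rw [← hxe, List.getElem_take]
      have hrel : leIdx w l[i] a := by
        have := List.pairwise_iff_getElem.1 (sortIdx_sorted w)
        exact this i m hil hm him
      have hne : l[i] ≠ a := by
        intro hcontra
        have := ((sortIdx_nodup w).getElem_inj_iff).1 hcontra
        omega
      rw [hxl, hf]
      exact decide_eq_true ((std_pred_iff w a l[i]).2 ⟨hrel, hne⟩)
    have h2 : (l.drop m).filter f = [] := by
      apply List.filter_eq_nil_iff.2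
      intro x hx
      obtain ⟨i, hi, hxe⟩ := List.mem_iff_getElem.1 hx
      have hmi : m + i < l.length := by
        have := hi; simp only [List.length_drop] at this; omega
      have hxl : x = l[m + i] := by rw [← hxe, List.getElem_drop]
      intro hfx
      have hpred := (std_pred_iff w a l[m+i]).1 (of_decide_eq_true (hxl ▸ hfx))
      rcases Nat.eq_zero_or_pos i with rfl | hipos
      · simp only [Nat.add_zero] at hpred
        exact hpred.2 rfl
      · have hrel : leIdx w a l[m+i] := by
          have := List.pairwise_iff_getElem.1 (sortIdx_sorted w)
          exact this m (m + i) hm hmi (by omega)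
        have : l[m+i] = a := antisymm hpred.1 hrel
        have := ((sortIdx_nodup w).getElem_inj_iff).1 this
        omega
    rw [h1, h2, List.append_nil]
  have hlen : (l.take m).length = m := by
    simp only [List.length_take]; omega
  calc ((List.range w.length).filter (fun j =>
          w.getD j 0 < w.getD a 0 ∨ (w.getD j 0 = w.getD a 0 ∧ j < a))).length
      = ((List.range w.length).filter f).length := rfl
    _ = (l.filter f).length := hperm
    _ = m := by rw [hfl, hlen]

lemma std_getElem (w : List ℕ) {i : ℕ} (hi : i < w.length) :
    (std w)[i]'(by simpa [std] using hi)
      = ((List.range w.length).filter (fun j =>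
          w.getD j 0 < w.getD i 0 ∨ (w.getD j 0 = w.getD i 0 ∧ j < i))).length + 1 := by
  simp [std]

lemma std_length (w : List ℕ) : (std w).length = w.length := by simp [std]

lemma std_map_sortIdx (w : List ℕ) :
    (sortIdx w).map (fun i =>
      ((List.range w.length).filter (fun j =>
        w.getD j 0 < w.getD i 0 ∨ (w.getD j 0 = w.getD i 0 ∧ j < i))).length + 1)
      = range' 1 w.length := by
  apply List.ext_getElem
  · simp [sortIdx_length]
  · intro m h1 h2
    simp only [List.getElem_map, List.getElem_range']
    have hm : m < (sortIdx w).length := by simpa using h1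
    rw [rank_sortIdx w hm]
    omega

lemma std_perm (w : List ℕ) : (std w).Perm (range' 1 w.length) := by
  have h1 : (std w).Perm ((sortIdx w).map (fun i =>
      ((List.range w.length).filter (fun j =>
        w.getD j 0 < w.getD i 0 ∨ (w.getD j 0 = w.getD i 0 ∧ j < i))).length + 1)) := by
    exact Perm.map _ (sortIdx_perm w).symm
  rw [std_map_sortIdx] at h1
  exact h1

lemma invPerm_length (s : List ℕ) : (invPerm s).length = s.length := by simp [invPerm]

lemma invPerm_getElem {s : List ℕ} {i : ℕ} (hi : i < s.length) :
    (invPerm s)[i]'(by rwa [invPerm_length]) = s.idxOf (i + 1) + 1 := by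
  simp [invPerm]

lemma invPerm_stdInv (w : List ℕ) : invPerm (stdInv w) = std w := by
  apply List.ext_getElem
  · rw [invPerm_length, stdInv_length, std_length]
  · intro j h1 h2
    have hj : j < w.length := by rwa [invPerm_length, stdInv_length] at h1
    have hjmem : j ∈ sortIdx w := mem_sortIdx.2 hj
    obtain ⟨m, hm, hlm⟩ := List.mem_iff_getElem.1 hjmem
    have hstd : (stdInv w)[m]'(by rwa [stdInv_length, ← sortIdx_length]) = j + 1 := by
      simp [stdInv, hlm]
    have hmem1 : (j + 1) ∈ stdInv w := by
      rw [← hstd]; exact List.getElem_mem _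
    have hidx : (stdInv w).idxOf (j + 1) = m := by
      have h3 : m < (stdInv w).length := by rwa [stdInv_length, ← sortIdx_length]
      have := nodup_indexOf_getElem (stdInv_nodup w) h3
      rwa [hstd] at this
    have hL : (invPerm (stdInv w))[j] = (stdInv w).idxOf (j + 1) + 1 :=
      invPerm_getElem (by rw [stdInv_length]; exact hj)
    rw [hL, hidx]
    rw [std_getElem w hj]
    have := rank_sortIdx w hm
    rw [hlm] at this
    omega

lemma perm_word_facts {n : ℕ} {s : List ℕ} (h : s.Perm (range' 1 n)) :
    s.length = n ∧ s.Nodup ∧ (∀ x ∈ s, 1 ≤ x ∧ x ≤ n) := by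
  refine ⟨by rw [h.length_eq, List.length_range'], h.nodup_iff.2 (List.nodup_range' 1), ?_⟩
  intro x hx
  have := List.mem_range'_1.1 (h.mem_iff.1 hx)
  omega

lemma invPerm_invPerm {n : ℕ} {s : List ℕ} (h : s.Perm (range' 1 n)) :
    invPerm (invPerm s) = s := by
  obtain ⟨hlen, hnodup, hbound⟩ := perm_word_facts h
  apply List.ext_getElem
  · rw [invPerm_length, invPerm_length]
  · intro j h1 h2
    have hj : j < s.length := by rwa [invPerm_length, invPerm_length] at h1
    have hsb := hbound s[j] (List.getElem_mem hj)
    have hi : s[j] - 1 < s.length := by omega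
    have hval : (invPerm s)[s[j] - 1]'(by rwa [invPerm_length]) = j + 1 := by
      rw [invPerm_getElem hi]
      rw [show s[j] - 1 + 1 = s[j] by omega]
      rw [nodup_indexOf_getElem hnodup hj]
    have hnodupi : (invPerm s).Nodup := by
      rw [invPerm]
      apply List.Nodup.map_on ?_ List.nodup_range
      intro x hx y hy hxy
      have hx' : (x + 1) ∈ s := by
        apply h.mem_iff.2; rw [List.mem_range'_1]
        rw [List.mem_range] at hx; omega
      have hy' : (y + 1) ∈ s := by
        apply h.mem_iff.2; rw [List.mem_range'_1]
        rw [List.mem_range] at hy; omega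
      have := (List.idxOf_inj (y := y + 1) hx').1 (by omega)
      omega
    have hidx : (invPerm s).idxOf (j + 1) = s[j] - 1 := by
      have h3 : s[j] - 1 < (invPerm s).length := by rwa [invPerm_length]
      have := nodup_indexOf_getElem hnodupi h3
      rwa [hval] at this
    rw [invPerm_getElem (by rwa [invPerm_length] : j < (invPerm s).length), hidx]
    omega

end Std

section TakeDrop

open List

lemma getD_eq' {l : List ℕ} {i : ℕ} (h : i < l.length) : l.getD i 0 = l[i] := by
  simp [List.getD_eq_getElem?_getD, List.getElem?_eq_getElem h]

lemma filter_lt_range {k n : ℕ} (h : k ≤ n) :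
    (List.range n).filter (· < k) = List.range k := by
  rw [List.range_eq_range', List.range_eq_range',
    show n = k + (n - k) by omega, ← range'_append_one 0 k (n - k), List.filter_append]
  rw [List.filter_eq_self.2 (fun x hx => by
      have := List.mem_range'_1.1 hx; simp; omega),
    List.filter_eq_nil_iff.2 (fun x hx => by
      have := List.mem_range'_1.1 hx; simp; omega)]
  simp

lemma filter_ge_range {k n : ℕ} (h : k ≤ n) :
    (List.range n).filter (fun x => k ≤ x) = range' k (n - k) := by
  rw [List.range_eq_range',
    show n = k + (n - k) by omega, ← range'_append_one 0 k (n - k), List.filter_append]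
  rw [List.filter_eq_nil_iff.2 (fun x hx => by
      have := List.mem_range'_1.1 hx; simp; omega),
    List.filter_eq_self.2 (fun x hx => by
      have := List.mem_range'_1.1 hx; simp; omega)]
  simp [show 0 + k = k by omega]

lemma leIdx_take {w : List ℕ} {k i j : ℕ} (hi : i < k) (hj : j < k) (hk : k ≤ w.length) :
    leIdx (w.take k) i j ↔ leIdx w i j := by
  have hlen : (w.take k).length = k := by rw [List.length_take]; omega
  have e1 : (w.take k).getD i 0 = w.getD i 0 := by
    rw [getD_eq' (by omega : i < (w.take k).length), getD_eq' (by omega : i < w.length),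
      List.getElem_take]
  have e2 : (w.take k).getD j 0 = w.getD j 0 := by
    rw [getD_eq' (by omega : j < (w.take k).length), getD_eq' (by omega : j < w.length),
      List.getElem_take]
  unfold leIdx
  rw [e1, e2]

lemma leIdx_drop {w : List ℕ} {k i j : ℕ} (hi : k ≤ i) (hj : k ≤ j)
    (hi' : i < w.length) (hj' : j < w.length) :
    leIdx (w.drop k) (i - k) (j - k) ↔ leIdx w i j := by
  have hlen : (w.drop k).length = w.length - k := by rw [List.length_drop]
  have e1 : (w.drop k).getD (i - k) 0 = w.getD i 0 := by
    rw [getD_eq' (by omega : i - k < (w.drop k).length), getD_eq' hi', List.getElem_drop]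
    congr 1
    omega
  have e2 : (w.drop k).getD (j - k) 0 = w.getD j 0 := by
    rw [getD_eq' (by omega : j - k < (w.drop k).length), getD_eq' hj', List.getElem_drop]
    congr 1
    omega
  unfold leIdx
  rw [e1, e2]
  constructor
  · rintro (h | ⟨h1, h2⟩)
    · exact Or.inl h
    · exact Or.inr ⟨h1, by omega⟩
  · rintro (h | ⟨h1, h2⟩)
    · exact Or.inl h
    · exact Or.inr ⟨h1, by omega⟩

lemma sortIdx_take {w : List ℕ} {k : ℕ} (hk : k ≤ w.length) :
    sortIdx (w.take k) = (sortIdx w).filter (· < k) := by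
  have hlen : (w.take k).length = k := by rw [List.length_take]; omega
  have hmemL : ∀ i ∈ sortIdx (w.take k), i < k := by
    intro i hi
    have := mem_sortIdx.1 hi
    omega
  have hs1 : (sortIdx (w.take k)).Pairwise (leIdx w) := by
    refine (sortIdx_sorted (w.take k)).imp_of_mem ?_
    intro a b ha hb hab
    exact (leIdx_take (hmemL a ha) (hmemL b hb) hk).1 hab
  have hs2 : ((sortIdx w).filter (· < k)).Pairwise (leIdx w) :=
    (sortIdx_sorted w).filter _
  have hp : (sortIdx (w.take k)).Perm ((sortIdx w).filter (· < k)) := by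
    refine ((sortIdx_perm (w.take k)).trans ?_).trans ((sortIdx_perm w).filter _).symm
    rw [hlen, filter_lt_range hk]
  exact List.Perm.eq_of_pairwise' hs1 hs2 hp

lemma sortIdx_drop {w : List ℕ} {k : ℕ} (hk : k ≤ w.length) :
    sortIdx (w.drop k) = ((sortIdx w).filter (fun x => k ≤ x)).map (· - k) := by
  have hlen : (w.drop k).length = w.length - k := by rw [List.length_drop]
  have hmemF : ∀ i ∈ (sortIdx w).filter (fun x => k ≤ x), k ≤ i ∧ i < w.length := by
    intro i hi
    obtain ⟨h1, h2⟩ := List.mem_filter.1 hi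
    exact ⟨of_decide_eq_true h2, mem_sortIdx.1 h1⟩
  have hs1 : (sortIdx (w.drop k)).Pairwise (leIdx (w.drop k)) := sortIdx_sorted _
  have hs2 : (((sortIdx w).filter (fun x => k ≤ x)).map (· - k)).Pairwise (leIdx (w.drop k)) := by
    rw [List.pairwise_map]
    refine ((sortIdx_sorted w).filter _).imp_of_mem ?_
    intro a b ha hb hab
    obtain ⟨ha1, ha2⟩ := hmemF a ha
    obtain ⟨hb1, hb2⟩ := hmemF b hb
    exact (leIdx_drop ha1 hb1 ha2 hb2).2 hab
  have hp : (sortIdx (w.drop k)).Perm (((sortIdx w).filter (fun x => k ≤ x)).map (· - k)) := by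
    refine ((sortIdx_perm (w.drop k)).trans ?_).trans (Perm.map _ ((sortIdx_perm w).filter _).symm)
    rw [hlen, filter_ge_range hk]
    rw [show (range' k (w.length - k)).map (· - k) = range (w.length - k) from by
      rw [List.range_eq_range', ← map_sub_range' k 0 (w.length - k), Nat.add_zero]]
  exact List.Perm.eq_of_pairwise' hs1 hs2 hp

lemma stdInv_filter_le {w : List ℕ} {k : ℕ} (hk : k ≤ w.length) :
    (stdInv w).filter (· ≤ k) = stdInv (w.take k) := by
  rw [stdInv, stdInv, List.filter_map, sortIdx_take hk]
  congr 1

lemma stdInv_filter_gt {w : List ℕ} {k : ℕ} (hk : k ≤ w.length) :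
    ((stdInv w).filter (k < ·)).map (· - k) = stdInv (w.drop k) := by
  rw [stdInv, stdInv, List.filter_map, sortIdx_drop hk, List.map_map]
  have e1 : ((sortIdx w).filter ((fun x => decide (k < x)) ∘ (· + 1)))
      = (sortIdx w).filter (fun x => k ≤ x) := by
    apply List.filter_congr
    intro x _
    simp only [Function.comp_apply]
    exact decide_eq_decide.2 (by omega)
  rw [e1, List.map_map]
  apply List.map_congr_left
  intro x hx
  have hkx : k ≤ x := of_decide_eq_true (List.mem_filter.1 hx).2
  simp only [Function.comp_apply]
  omega

end TakeDrop

section Final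

open List

lemma pel_apply (T : BinaryTree Unit) (u : List ℕ) :
    Pel T u = if shape (P (stdInv u)) = T then (1 : ℚ) else 0 := by
  classical
  have hiff : (∃ σ, IsPermWord u.length σ ∧ shape (P σ) = T ∧ std u = invPerm σ)
      ↔ shape (P (stdInv u)) = T := by
    constructor
    · rintro ⟨σ, hperm, hsh, hstd⟩
      have h1 : invPerm σ = invPerm (stdInv u) := by rw [← hstd, invPerm_stdInv]
      have hσ : σ = stdInv u := by
        calc σ = invPerm (invPerm σ) := (invPerm_invPerm hperm).symm
          _ = invPerm (invPerm (stdInv u)) := by rw [h1]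
          _ = stdInv u := invPerm_invPerm (stdInv_perm u)
      rwa [hσ] at hsh
    · intro h
      exact ⟨stdInv u, stdInv_perm u, h, (invPerm_stdInv u).symm⟩
  simp only [Pel]
  exact if_congr hiff rfl rfl

lemma shapeQ_numNodes (u : List ℕ) : (shape (P (stdInv u))).numNodes = u.length := by
  rw [numNodes_shape, numNodes_P, stdInv_length]

lemma treeWord_Q (u : List ℕ) :
    treeWord (shape (P (stdInv u))) = postorder (P (stdInv u)) := by
  apply treeWord_of_bst (isBST_P _)
  rw [numNodes_P, stdInv_length]
  exact inorder_P_eq_range' (stdInv_perm u)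

end Final

end Sylv

/-- product rule for the tree basis of `PBT` inside `FQSym`:
`P_{T'} · P_{T''} = ∑_{T ∈ Sh(T',T'')} P_T`. -/
theorem stmt10 (T' T'' : BinaryTree Unit) :
    Sylv.mulF (Sylv.Pel T') (Sylv.Pel T'') =
      ∑ᶠ T ∈ {T : BinaryTree Unit |
          Sylv.IsShuffle (Sylv.treeWord T') (Sylv.shift T'.numNodes (Sylv.treeWord T''))
            (Sylv.treeWord T)},
        Sylv.Pel T := by
  classical
  funext w
  set n := w.length with hn
  set k := T'.numNodes with hk
  set k'' := T''.numNodes with hk2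
  -- finiteness of the index set
  have hfin : {T : BinaryTree Unit |
      Sylv.IsShuffle (Sylv.treeWord T') (Sylv.shift k (Sylv.treeWord T''))
        (Sylv.treeWord T)}.Finite := by
    have h0 : {x : List ℕ |
        x.Perm (Sylv.treeWord T' ++ Sylv.shift k (Sylv.treeWord T''))}.Finite := by
      apply Set.Finite.subset
        ((Sylv.treeWord T' ++ Sylv.shift k (Sylv.treeWord T'')).permutations.toFinset.finite_toSet)
      intro x hx
      simp only [Set.mem_setOf_eq] at hx
      simp only [Finset.coe_sort_coe, List.toFinset_coe, Finset.mem_coe, List.mem_toFinset,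
        List.mem_permutations]
      exact hx
    have h1 : {x : List ℕ |
        Sylv.IsShuffle (Sylv.treeWord T') (Sylv.shift k (Sylv.treeWord T'')) x}.Finite :=
      h0.subset (fun x hx => hx.perm)
    have he : {T : BinaryTree Unit |
        Sylv.IsShuffle (Sylv.treeWord T') (Sylv.shift k (Sylv.treeWord T'')) (Sylv.treeWord T)}
        = Sylv.treeWord ⁻¹' {x : List ℕ |
            Sylv.IsShuffle (Sylv.treeWord T') (Sylv.shift k (Sylv.treeWord T'')) x} := rfl
    rw [he]
    exact Set.Finite.preimage (Sylv.treeWord_inj.injOn) h1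
  have hR : (∑ᶠ T ∈ {T : BinaryTree Unit |
      Sylv.IsShuffle (Sylv.treeWord T') (Sylv.shift k (Sylv.treeWord T''))
        (Sylv.treeWord T)}, Sylv.Pel T) = ∑ T ∈ hfin.toFinset, Sylv.Pel T :=
    finsum_mem_eq_finite_toFinset_sum _ hfin
  rw [hR, Finset.sum_apply]
  simp only [Sylv.mulF, Sylv.pel_apply]
  rw [Finset.sum_ite_eq]
  by_cases hsh : Sylv.IsShuffle (Sylv.treeWord T') (Sylv.shift k (Sylv.treeWord T''))
      (Sylv.treeWord (Sylv.shape (Sylv.P (Sylv.stdInv w))))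
  · -- the shuffle condition holds
    have hmem : Sylv.shape (Sylv.P (Sylv.stdInv w)) ∈ hfin.toFinset := by
      rw [Set.Finite.mem_toFinset]
      exact hsh
    rw [if_pos hmem]
    -- length bookkeeping
    have hlen := hsh.length
    rw [Sylv.length_treeWord, Sylv.length_treeWord, Sylv.shapeQ_numNodes,
      Sylv.shift, List.length_map, Sylv.length_treeWord] at hlen
    -- hlen : n = k + k''
    have hkn : k ≤ n := by omega
    have hδ : (Sylv.stdInv w).Perm (List.range' 1 (k + k'')) := by
      rw [← hlen]
      exact Sylv.stdInv_perm w
    have hkey := (Sylv.key_iff k k'' T' T'' rfl rfl (Sylv.stdInv w) hδ).2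
      (by rwa [Sylv.treeWord_Q] at hsh)
    obtain ⟨h1, h2⟩ := hkey
    rw [Sylv.stdInv_filter_le hkn] at h1
    rw [Sylv.stdInv_filter_gt hkn] at h2
    -- h1 : shape (P (stdInv (take k w))) = T', h2 : likewise for drop
    rw [Finset.sum_eq_single_of_mem k (Finset.mem_range.2 (by omega))]
    · rw [if_pos h1, if_pos h2]
      norm_num
    · intro b hb hbk
      have hbn : b ≤ n := by
        have := Finset.mem_range.1 hb; omega
      by_cases hc : Sylv.shape (Sylv.P (Sylv.stdInv (w.take b))) = T'
      · exfalso
        have := Sylv.shapeQ_numNodes (w.take b)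
        rw [hc, List.length_take] at this
        omega
      · rw [if_neg hc, zero_mul]
  · -- the shuffle condition fails
    have hmem : Sylv.shape (Sylv.P (Sylv.stdInv w)) ∉ hfin.toFinset := by
      rw [Set.Finite.mem_toFinset]
      exact hsh
    rw [if_neg hmem]
    apply Finset.sum_eq_zero
    intro i hi
    have hin : i ≤ n := by
      have := Finset.mem_range.1 hi; omega
    by_cases c1 : Sylv.shape (Sylv.P (Sylv.stdInv (w.take i))) = T'
    · by_cases c2 : Sylv.shape (Sylv.P (Sylv.stdInv (w.drop i))) = T''
      · exfalso
        have e1 := Sylv.shapeQ_numNodes (w.take i)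
        rw [c1, List.length_take] at e1
        have e2 := Sylv.shapeQ_numNodes (w.drop i)
        rw [c2, List.length_drop] at e2
        -- e1 : k = min i n, e2 : k'' = n - i
        have hik : i = k := by omega
        have hlen : n = k + k'' := by omega
        have hδ : (Sylv.stdInv w).Perm (List.range' 1 (k + k'')) := by
          rw [← hlen]
          exact Sylv.stdInv_perm w
        rw [hik] at c1 c2 hin
        rw [← Sylv.stdInv_filter_le hin] at c1
        rw [← Sylv.stdInv_filter_gt hin] at c2
        have hkey := (Sylv.key_iff k k'' T' T'' rfl rfl (Sylv.stdInv w) hδ).1 ⟨c1, c2⟩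
        rw [← Sylv.treeWord_Q] at hkey
        exact hsh hkey
      · rw [if_neg c2, mul_zero]
    · rw [if_neg c1, zero_mul]
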